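/- arXiv:1404.4639 — 5 statements merged into one kernel-verified Lean document; each statement's English description precedes it below -/
import Mathlib

section
/- If μ ≥ 2(M+1) for some M ≥ 0, and λ > 1 - r/D where 0 < r ≤ D / log2(μ) and D > 0, then D(μ^λ - 1) ≥ D·M, i.e., the exponential cost at relative load λ exceeding 1 - r/D is at least D·M. -/
/-- If `μ ≥ 2(M+1)`, `M ≥ 0`, `λ > 1 - r/D`, `0 < r ≤ D / log2 μ`, `D > 0`,
then `D(μ^λ - 1) ≥ D·M`. -/
theorem stmt_3 (μ M lam r D : ℝ) (hM : 0 ≤ M) (hμ : μ ≥ 2 * (M + 1))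
    (hlam : lam > 1 - r / D) (hr : 0 < r) (hrD : r ≤ D / Real.logb 2 μ)
    (hD : 0 < D) : D * (μ ^ lam - 1) ≥ D * M := by
  have hμ2 : (2:ℝ) ≤ μ := by nlinarith
  have hμ1 : (1:ℝ) < μ := by linarith
  have hμ0 : (0:ℝ) < μ := by linarith
  have hlogb : 0 < Real.logb 2 μ := Real.logb_pos (by norm_num) hμ1
  have hrD' : r / D ≤ 1 / Real.logb 2 μ := by
    rw [div_le_div_iff₀ hD hlogb]
    rw [le_div_iff₀ hlogb] at hrD
    linarith [hrD]
  have hlam' : 1 - 1 / Real.logb 2 μ ≤ lam := by linarith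
  have hlogμ : 0 < Real.log μ := Real.log_pos hμ1
  have key : μ ^ (1 - 1 / Real.logb 2 μ) = μ / 2 := by
    rw [Real.rpow_sub hμ0, Real.rpow_one]
    congr 1
    rw [Real.logb, one_div, inv_div, Real.rpow_def_of_pos hμ0]
    have : Real.log μ * (Real.log 2 / Real.log μ) = Real.log 2 := by
      field_simp
    rw [this, Real.exp_log (by norm_num)]
  have hmono : μ ^ (1 - 1 / Real.logb 2 μ) ≤ μ ^ lam :=
    Real.rpow_le_rpow_of_exponent_le hμ1.le hlam'
  rw [key] at hmono
  nlinarith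
end

section
/- Let C(λ) = D(μ^λ - 1) with D > 0, μ > 1. For any λ ≥ 0 and any r with 0 ≤ r/D ≤ 1/log2(μ), the cost increment satisfies C(λ + r/D) - C(λ) ≤ log2(μ) · ((r/D)·C(λ) + r). -/
open Real

/-- Writing `μ ^ s = 2 ^ (logb 2 μ * s)`, this is concavity of `x ↦ 2 ^ x` on `[0, 1]` in the form
`2 ^ x ≤ 1 + x`. -/
lemma rpow_le_one_add_logb_two_mul {μ s : ℝ} (hμ : 0 < μ) (hs₀ : 0 ≤ logb 2 μ * s)
    (hs₁ : logb 2 μ * s ≤ 1) : μ ^ s ≤ 1 + logb 2 μ * s := by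
  have hpow : μ ^ s = (1 + 1 : ℝ) ^ (logb 2 μ * s) := by
    rw [one_add_one_eq_two, rpow_mul zero_le_two, rpow_logb two_pos one_lt_two.ne' hμ]
  simpa [hpow] using rpow_one_add_le_one_add_mul_self (s := 1) (by norm_num) hs₀ hs₁

lemma rpow_add_sub_rpow_le {μ lam s : ℝ} (hμ : 0 < μ) (hs₀ : 0 ≤ logb 2 μ * s)
    (hs₁ : logb 2 μ * s ≤ 1) : μ ^ (lam + s) - μ ^ lam ≤ μ ^ lam * (logb 2 μ * s) := by
  have hstep := rpow_le_one_add_logb_two_mul hμ hs₀ hs₁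
  calc μ ^ (lam + s) - μ ^ lam = μ ^ lam * (μ ^ s - 1) := by rw [rpow_add hμ]; ring
    _ ≤ μ ^ lam * (logb 2 μ * s) := by
      gcongr
      linarith

theorem stmt_5_general (D μ lam r : ℝ) (hD : 0 < D) (hμ : 1 < μ)
    (hr0 : 0 ≤ r / D) (hr1 : r / D ≤ 1 / Real.logb 2 μ) :
    D * (μ ^ (lam + r / D) - 1) - D * (μ ^ lam - 1) ≤
      Real.logb 2 μ * ((r / D) * (D * (μ ^ lam - 1)) + r) := by
  have hL : 0 < logb 2 μ := logb_pos one_lt_two hμ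
  have hs₀ : 0 ≤ logb 2 μ * (r / D) := mul_nonneg hL.le hr0
  have hs₁ : logb 2 μ * (r / D) ≤ 1 := by
    rw [mul_comm, ← le_div_iff₀ hL]
    exact hr1
  have hinc := rpow_add_sub_rpow_le (lam := lam) (zero_lt_one.trans hμ) hs₀ hs₁
  have hr : r / D * D = r := div_mul_cancel₀ r hD.ne'
  calc D * (μ ^ (lam + r / D) - 1) - D * (μ ^ lam - 1)
      = D * (μ ^ (lam + r / D) - μ ^ lam) := by ring
    _ ≤ D * (μ ^ lam * (logb 2 μ * (r / D))) := mul_le_mul_of_nonneg_left hinc hD.le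
    _ = logb 2 μ * ((r / D) * (D * (μ ^ lam - 1)) + r / D * D) := by ring
    _ = logb 2 μ * ((r / D) * (D * (μ ^ lam - 1)) + r) := by rw [hr]

/-- Cost increment bound: for `C(λ) = D(μ^λ - 1)`, `D > 0`, `μ > 1`, `λ ≥ 0`,
`0 ≤ r/D ≤ 1/log2 μ`, we have
`C(λ + r/D) - C(λ) ≤ log2 μ · ((r/D)·C(λ) + r)`. -/
theorem stmt_5 (D μ lam r : ℝ) (hD : 0 < D) (hμ : 1 < μ) (hlam : 0 ≤ lam)
    (hr0 : 0 ≤ r / D) (hr1 : r / D ≤ 1 / Real.logb 2 μ) :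
    D * (μ ^ (lam + r / D) - 1) - D * (μ ^ lam - 1) ≤
      Real.logb 2 μ * ((r / D) * (D * (μ ^ lam - 1)) + r) :=
  stmt_5_general D μ lam r hD hμ hr0 hr1
end

section
/- Consider a sequence of content cachings at a single node with capacity D > 0, content sizes r_j > 0, relative loads λ_j = (∑_{k<j, k cached} r_k)/D, and costs C_j = D(μ^{λ_j}-1) with μ > 1. Suppose each cached content j satisfies the admission condition s_j ≥ (r_j/D)·C_j (saving at least cost) and s_j ≥ r_j, and r_j/D ≤ 1/log2(μ). Then 2·log2(μ)·∑_{j cached} s_j ≥ C_{final}, where C_{final} is the cost after all cachings. -/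
/-!
Write `C(x) = D (μ ^ (x / D) - 1)` for the cost at total cached size `x` and `L = log₂ μ`.
Since `μ = 2 ^ L` and `2 ^ u ≤ 1 + u` on `[0, 1]`, caching a content of size `r ≤ D / L` raises
the cost by at most `L ((r / D) C(x) + r)`; by the admission rule and `s ≥ r` this is at most
`2 L s`. Summing over the cached contents in their caching order gives the claim.
-/

open Finset Real

noncomputable def cachingCost (D μ x : ℝ) : ℝ := D * (μ ^ (x / D) - 1)

lemma rpow_le_one_add_logb_mul {μ t : ℝ} (hμ : 0 < μ) (ht₀ : 0 ≤ logb 2 μ * t)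
    (ht₁ : logb 2 μ * t ≤ 1) : μ ^ t ≤ 1 + logb 2 μ * t :=
  calc μ ^ t = ((2 : ℝ) ^ logb 2 μ) ^ t := by rw [rpow_logb two_pos (by norm_num) hμ]
    _ = (1 + 1) ^ (logb 2 μ * t) := by rw [← rpow_mul zero_le_two]; norm_num
    _ ≤ 1 + logb 2 μ * t * 1 := rpow_one_add_le_one_add_mul_self (by norm_num) ht₀ ht₁
    _ = 1 + logb 2 μ * t := by ring

lemma cachingCost_add_le {D μ x r : ℝ} (hD : 0 < D) (hμ : 1 < μ) (hr : 0 ≤ r)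
    (hrD : r / D ≤ 1 / logb 2 μ) :
    cachingCost D μ (x + r) ≤
      cachingCost D μ x + logb 2 μ * (r / D * cachingCost D μ x + r) := by
  have hL : 0 < logb 2 μ := logb_pos one_lt_two hμ
  have hμr : μ ^ (r / D) ≤ 1 + logb 2 μ * (r / D) :=
    rpow_le_one_add_logb_mul (by positivity) (by positivity)
      (by rwa [← le_div_iff₀' hL])
  have hsplit : μ ^ ((x + r) / D) = μ ^ (x / D) * μ ^ (r / D) := by
    rw [add_div, rpow_add (by positivity)]
  have hD_mul : r / D * D = r := div_mul_cancel₀ r hD.ne'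
  have hμx : 0 ≤ D * μ ^ (x / D) := by positivity
  unfold cachingCost
  rw [hsplit]
  nlinarith [mul_le_mul_of_nonneg_left hμr hμx]

lemma cachingCost_le_of_admitted {D μ : ℝ} (hD : 0 < D) (hμ : 1 < μ) {r s : ℕ → ℝ}
    {A : Finset ℕ} (hr : ∀ j ∈ A, 0 < r j)
    (hadm : ∀ j ∈ A, s j ≥ r j / D *
      cachingCost D μ (∑ k ∈ (range j).filter (· ∈ A), r k))
    (hs : ∀ j ∈ A, s j ≥ r j) (hrD : ∀ j ∈ A, r j / D ≤ 1 / logb 2 μ) (n : ℕ) :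
    cachingCost D μ (∑ k ∈ (range n).filter (· ∈ A), r k) ≤
      2 * logb 2 μ * ∑ j ∈ (range n).filter (· ∈ A), s j := by
  induction n with
  | zero => simp [cachingCost]
  | succ n ih =>
    rw [range_add_one, filter_insert]
    split_ifs with hn
    · have hn_fresh : n ∉ (range n).filter (· ∈ A) := by simp
      have hL : 0 < logb 2 μ := logb_pos one_lt_two hμ
      rw [sum_insert hn_fresh, sum_insert hn_fresh, add_comm (r n)]
      calc _ ≤ _ := cachingCost_add_le hD hμ (hr n hn).le (hrD n hn)
        _ ≤ 2 * logb 2 μ * ∑ j ∈ (range n).filter (· ∈ A), s j + logb 2 μ * (s n + s n) := by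
            gcongr
            · exact hadm n hn
            · exact hs n hn
        _ = _ := by ring
    · exact ih

theorem stmt_6_general (D μ : ℝ) (hD : 0 < D) (hμ : 1 < μ) (r s : ℕ → ℝ)
    (A : Finset ℕ) (hr : ∀ j ∈ A, 0 < r j)
    (hadm : ∀ j ∈ A, s j ≥ (r j / D) *
      (D * (μ ^ ((∑ k ∈ (Finset.range j).filter (fun k => k ∈ A), r k) / D) - 1)))
    (hs : ∀ j ∈ A, s j ≥ r j)
    (hrD : ∀ j ∈ A, r j / D ≤ 1 / Real.logb 2 μ) :
    2 * Real.logb 2 μ * ∑ j ∈ A, s j ≥ D * (μ ^ ((∑ k ∈ A, r k) / D) - 1) := by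
  have hprefix : (range (A.sup id + 1)).filter (· ∈ A) = A := by
    rw [filter_mem_eq_inter, inter_eq_right]
    exact subset_range_sup_succ A
  have h := cachingCost_le_of_admitted hD hμ hr hadm hs hrD (A.sup id + 1)
  rwa [hprefix] at h

/-- Single-node Lemma 1: if every cached content satisfies the admission
condition (saving at least the cost at its insertion load), saving at least
its size, and has size at most `D / log2 μ`, then twice `log2 μ` times the
total saving dominates the final cost. -/
theorem stmt_6 (D μ : ℝ) (hD : 0 < D) (hμ : 1 < μ) (N : ℕ) (r s : ℕ → ℝ)
    (A : Finset ℕ) (hA : A ⊆ Finset.range N) (hr : ∀ j ∈ A, 0 < r j)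
    (hadm : ∀ j ∈ A, s j ≥ (r j / D) *
      (D * (μ ^ ((∑ k ∈ (Finset.range j).filter (fun k => k ∈ A), r k) / D) - 1)))
    (hs : ∀ j ∈ A, s j ≥ r j)
    (hrD : ∀ j ∈ A, r j / D ≤ 1 / Real.logb 2 μ) :
    2 * Real.logb 2 μ * ∑ j ∈ A, s j ≥ D * (μ ^ ((∑ k ∈ A, r k) / D) - 1) :=
  stmt_6_general D μ hD hμ r s A hr hadm hs hrD
end

section
/- Under the hypotheses of the previous two lemmas for a single node — namely (i) 2·log2(μ)·∑_{j∈A} s_j ≥ C_final where A is the set of contents cached online, (ii) ∑_{j∈Q} s_j ≤ C* ≤ C_final for the set Q of contents cached offline but not online — any offline solution A* satisfies ∑_{j∈A*} s_j ≤ 2·log2(2μ)·∑_{j∈A} s_j. -/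
open Finset

theorem Finset.sum_le_sum_sdiff_add_sum {ι M : Type*} [DecidableEq ι] [AddCommMonoid M]
    [PartialOrder M] [IsOrderedAddMonoid M] (s t : Finset ι) (f : ι → M) (hf : ∀ i ∈ t, 0 ≤ f i) :
    ∑ i ∈ s, f i ≤ ∑ i ∈ s \ t, f i + ∑ i ∈ t, f i := by
  rw [← sum_union sdiff_disjoint, sdiff_union_self_eq_union]
  exact sum_le_sum_of_subset_of_nonneg subset_union_left fun i hi his =>
    hf i ((mem_union.mp hi).resolve_left his)

theorem Real.logb_two_mul {x : ℝ} (hx : x ≠ 0) : Real.logb 2 (2 * x) = 1 + Real.logb 2 x := by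
  rw [Real.logb_mul two_ne_zero hx, Real.logb_self_eq_one one_lt_two]

/-- Single-node Lemma 3: combining the two lemmas, the offline saving is at
most `2 log2(2μ)` times the online saving. -/
theorem stmt_8 (μ Cstar Cfinal : ℝ) (hμ : 1 < μ) (s : ℕ → ℝ) (hs : ∀ j, 0 ≤ s j)
    (A Astar : Finset ℕ)
    (h1 : 2 * Real.logb 2 μ * ∑ j ∈ A, s j ≥ Cfinal)
    (h2 : ∑ j ∈ Astar \ A, s j ≤ Cstar) (h3 : Cstar ≤ Cfinal) :
    ∑ j ∈ Astar, s j ≤ 2 * Real.logb 2 (2 * μ) * ∑ j ∈ A, s j := by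
  have hA : 0 ≤ ∑ j ∈ A, s j := sum_nonneg fun j _ => hs j
  calc ∑ j ∈ Astar, s j ≤ ∑ j ∈ Astar \ A, s j + ∑ j ∈ A, s j :=
        sum_le_sum_sdiff_add_sum Astar A s fun j _ => hs j
    _ ≤ (2 * Real.logb 2 μ + 1) * ∑ j ∈ A, s j := by linarith
    _ ≤ 2 * Real.logb 2 (2 * μ) * ∑ j ∈ A, s j := by
        rw [Real.logb_two_mul (zero_lt_one.trans hμ).ne']
        gcongr
        linarith
end

section
/- Let f(λ) = D(μ^λ - 1) with D > 0 and μ ≥ 4. If the online algorithm only caches a content of size r when the saving s satisfies s ≥ (r/D)·f(λ), and s ≤ nTF·r always holds (assumption A1 upper bound), and μ = 2(nTF+1), then after any sequence of accepted contents the relative load λ never exceeds 1. -/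
/-!
With `μ = 2(P + 1)` the price `f(λ) = D(μ^λ - 1)` reaches `D·P` at load `λ = 1 - 1/log₂ μ`,
since `μ^(1 - 1/log₂ μ) = μ/2`. A content of size `r ≤ D/log₂ μ` can only push the load past `1`
from a load at least that large, and there its cost `(r/D)·f(λ) ≥ P·r` already exceeds any
admissible saving `s ≤ P·r`, so it is rejected.
-/

open Real Finset

lemma rpow_one_sub_inv_logb_two {μ : ℝ} (hμ : 1 < μ) : μ ^ (1 - (logb 2 μ)⁻¹) = μ / 2 := by
  have hμ0 : 0 < μ := zero_lt_one.trans hμ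
  rw [rpow_sub hμ0, rpow_one, inv_logb, rpow_logb hμ0 hμ.ne' two_pos]

lemma half_le_rpow_of_one_sub_inv_logb_two_le {μ x : ℝ} (hμ : 1 < μ)
    (hx : 1 - (logb 2 μ)⁻¹ ≤ x) : μ / 2 ≤ μ ^ x :=
  rpow_one_sub_inv_logb_two hμ ▸ rpow_le_rpow_of_exponent_le hμ.le hx

lemma sub_one_mul_le_cost_of_overflow {D μ lam r : ℝ} (hD : 0 < D) (hμ : 1 < μ)
    (hlam : lam ≤ 1) (hrD : r ≤ D / logb 2 μ) (hover : 1 < lam + r / D) :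
    (μ / 2 - 1) * r ≤ r / D * (D * (μ ^ lam - 1)) := by
  have hr : 0 < r := (div_pos_iff_of_pos_right hD).mp (by linarith)
  have hrD' : r / D ≤ (logb 2 μ)⁻¹ := by rwa [div_le_iff₀ hD, inv_mul_eq_div]
  have hpow : μ / 2 ≤ μ ^ lam := half_le_rpow_of_one_sub_inv_logb_two_le hμ (by linarith)
  calc (μ / 2 - 1) * r ≤ (μ ^ lam - 1) * r := by gcongr
    _ = r / D * (D * (μ ^ lam - 1)) := by field_simp

theorem sum_div_le_one_of_forall_lt_accept {D μ : ℝ} (hD : 0 < D) (hμ : 1 < μ) (N : ℕ)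
    (r s : ℕ → ℝ) (hrD : ∀ j, r j ≤ D / logb 2 μ) (hs : ∀ j, s j ≤ (μ / 2 - 1) * r j)
    (hacc : ∀ j < N, r j / D * (D * (μ ^ ((∑ k ∈ range j, r k) / D) - 1)) < s j) :
    (∑ k ∈ range N, r k) / D ≤ 1 := by
  induction N with
  | zero => simp
  | succ N ih =>
    have hprev := ih fun j hj => hacc j (Nat.lt_succ_of_lt hj)
    by_contra! hover
    rw [sum_range_succ, add_div] at hover
    have hcost := sub_one_mul_le_cost_of_overflow hD hμ hprev (hrD N) hover
    linarith [hacc N N.lt_succ_self, hs N]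

theorem stmt_12_general (D μ F : ℝ) (n T : ℕ) (hD : 0 < D)
    (hF : 1 ≤ F) (hμ : μ = 2 * ((n : ℝ) * T * F + 1)) (N : ℕ) (r s : ℕ → ℝ)
    (hrD : ∀ j, r j ≤ D / Real.logb 2 μ)
    (hs2 : ∀ j, s j ≤ (n : ℝ) * T * F * r j)
    (hacc : ∀ j < N, s j >
      (r j / D) * (D * (μ ^ ((∑ k ∈ Finset.range j, r k) / D) - 1))) :
    (∑ k ∈ Finset.range N, r k) / D ≤ 1 := by
  have hP : μ / 2 - 1 = n * T * F := by rw [hμ]; ring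
  have hμ1 : 1 < μ := by
    rw [hμ]; nlinarith [mul_nonneg (n.cast_nonneg : (0 : ℝ) ≤ n) T.cast_nonneg]
  exact sum_div_le_one_of_forall_lt_accept hD hμ1 N r s hrD (hP ▸ hs2) hacc

/-- Single-node Proposition 2: under the strict acceptance rule
`s_j > (r_j/D)·f(λ_j)` with `f(λ) = D(μ^λ - 1)`, `μ = 2(nTF+1)`,
`r_j ≤ D/log2 μ`, `r_j ≤ s_j ≤ nTF·r_j`, the relative load never exceeds 1. -/
theorem stmt_12 (D μ F : ℝ) (n T : ℕ) (hD : 0 < D) (hn : 0 < n) (hT : 0 < T)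
    (hF : 1 ≤ F) (hμ : μ = 2 * ((n : ℝ) * T * F + 1)) (N : ℕ) (r s : ℕ → ℝ)
    (hr : ∀ j, 0 < r j) (hrD : ∀ j, r j ≤ D / Real.logb 2 μ)
    (hs1 : ∀ j, r j ≤ s j) (hs2 : ∀ j, s j ≤ (n : ℝ) * T * F * r j)
    (hacc : ∀ j < N, s j >
      (r j / D) * (D * (μ ^ ((∑ k ∈ Finset.range j, r k) / D) - 1))) :
    (∑ k ∈ Finset.range N, r k) / D ≤ 1 :=
  stmt_12_general D μ F n T hD hF hμ N r s hrD hs2 hacc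
end
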